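/- For a metric G satisfying the radial block decomposition G(x) = P(x̂) + P_⊥(x̂)G(x)P_⊥(x̂), the straight line γ(s) = sv is, for every v ∈ ℝ^d, the unique solution to the geodesic equation with γ(0) = 0 and γ'(0) = v. -/

import Mathlib

/-!
The decomposition `G = P + P_⊥ G P_⊥` forces `G(x) x = x` and `xᵀ G(x) = xᵀ`. Differentiating
`G(z) z = z` gives `G(0) = 1`, hence `G(s v) v = v` on every ray, and
`∑ⱼ xⱼ ∂ₖGᵢⱼ(x) = δᵢₖ - Gᵢₖ(x)`. Along `x = s v` both terms of the geodesic force then vanish: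
`∂_v G(s v) v = 0` because `t ↦ G(t v) v` is constant, and
`s ∑ᵢⱼ vᵢ ∂ₖGᵢⱼ(s v) vⱼ = vₖ - (vᵀ G(s v))ₖ = 0`, which extends to `s = 0` by continuity.
So the line `s v` is a geodesic.

For uniqueness, coercivity makes `G(x)` invertible with `C¹` inverse, so the geodesic equation is
the first-order system `(γ, γ')' = (γ', G(γ)⁻¹ F(γ, γ'))` with a `C¹`, hence locally Lipschitz,
vector field, and its solutions with the same initial data agree.
-/

/-- The rank-one projection `P(x̂) = |x̂⟩⟨x̂|` as a matrix: entries `x_i x_j / |x|²`. -/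
noncomputable def projMat (d : ℕ) (x : Fin d → ℝ) : Matrix (Fin d) (Fin d) ℝ :=
  Matrix.of fun i j => x i * x j / (∑ k, x k ^ 2)

/-- The geodesic equation `2 e_k·G(γ)γ'' = γ'·(∇G·e_k)γ' − 2 e_k·(∇G·γ')γ'` at time `s`. -/
def IsGeodesicODE (d : ℕ) (G : (Fin d → ℝ) → Matrix (Fin d) (Fin d) ℝ)
    (γ γ' γ'' : ℝ → Fin d → ℝ) (s : ℝ) : Prop :=
  ∀ k : Fin d,
    2 * dotProduct (Pi.single k 1) ((G (γ s)).mulVec (γ'' s)) =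
      (∑ i, ∑ j, γ' s i *
          fderiv ℝ (fun z => G z i j) (γ s) (Pi.single k 1) * γ' s j) -
      2 * ∑ j, fderiv ℝ (fun z => G z k j) (γ s) (γ' s) * γ' s j

open Matrix Set

lemma sum_sq_ne_zero {ι : Type*} [Fintype ι] {x : ι → ℝ} (hx : x ≠ 0) : ∑ k, x k ^ 2 ≠ 0 := by
  simpa [dotProduct, sq] using mt dotProduct_self_eq_zero.mp hx

section MatrixCalculus

variable {E ι : Type*} [NormedAddCommGroup E] [NormedSpace ℝ E] [Fintype ι] [DecidableEq ι]
  {k : ℕ∞} {M : E → Matrix ι ι ℝ}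

lemma contDiff_det_of_entries (h : ∀ i j, ContDiff ℝ k fun x => M x i j) :
    ContDiff ℝ k fun x => (M x).det := by
  simp only [det_apply]
  exact ContDiff.sum fun σ _ => (contDiff_prod fun i _ => h (σ i) i).const_smul _

lemma contDiff_inv_apply_of_entries (h : ∀ i j, ContDiff ℝ k fun x => M x i j)
    (hdet : ∀ x, (M x).det ≠ 0) (i j : ι) : ContDiff ℝ k fun x => (M x)⁻¹ i j := by
  have hadj : ContDiff ℝ k fun x => (M x).adjugate i j := by
    simp only [adjugate_apply]
    refine contDiff_det_of_entries fun a c => ?_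
    rcases eq_or_ne a j with rfl | haj
    · simpa only [updateRow_self] using contDiff_const
    · simpa only [updateRow_ne haj] using h a c
  have hdetinv : ContDiff ℝ k fun x => ((M x).det)⁻¹ :=
    (contDiff_det_of_entries h).inv hdet
  simpa only [inv_def, Ring.inverse_eq_inv', Matrix.smul_apply, smul_eq_mul] using
    hdetinv.mul hadj

end MatrixCalculus

lemma det_ne_zero_of_coercive {ι : Type*} [Fintype ι] [DecidableEq ι] {M : Matrix ι ι ℝ} {a : ℝ}
    (ha : 0 < a) (hM : ∀ y, a * ∑ i, y i ^ 2 ≤ y ⬝ᵥ M *ᵥ y) : M.det ≠ 0 := fun hdet => by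
  obtain ⟨y, hy, hMy⟩ := exists_mulVec_eq_zero_iff.mpr hdet
  have hpos : 0 < ∑ i, y i ^ 2 := lt_of_le_of_ne' (by positivity) (sum_sq_ne_zero hy)
  have := hM y
  rw [hMy, dotProduct_zero] at this
  nlinarith

theorem ODE_solution_unique_of_contDiff {E : Type*} [NormedAddCommGroup E] [NormedSpace ℝ E]
    [ProperSpace E] {F : E → E} (hF : ContDiff ℝ 1 F) {f g : ℝ → E} {a b : ℝ}
    (hf : ∀ t ∈ Icc a b, HasDerivAt f (F (f t)) t) (hg : ∀ t ∈ Icc a b, HasDerivAt g (F (g t)) t)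
    (ha : f a = g a) : EqOn f g (Icc a b) := by
  have hfc : ContinuousOn f (Icc a b) := HasDerivAt.continuousOn hf
  have hgc : ContinuousOn g (Icc a b) := HasDerivAt.continuousOn hg
  obtain ⟨r, hr⟩ := ((isCompact_Icc.image_of_continuousOn hfc).union
    (isCompact_Icc.image_of_continuousOn hgc)).isBounded.subset_closedBall 0
  obtain ⟨K, hK⟩ := hF.contDiffOn.exists_lipschitzOnWith one_ne_zero (convex_closedBall 0 r)
    (isCompact_closedBall 0 r)
  exact ODE_solution_unique_of_mem_Icc_right (fun _ _ => hK) hfc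
    (fun t ht => (hf t (Ico_subset_Icc_self ht)).hasDerivWithinAt)
    (fun t ht => hr (.inl (mem_image_of_mem f (Ico_subset_Icc_self ht)))) hgc
    (fun t ht => (hg t (Ico_subset_Icc_self ht)).hasDerivWithinAt)
    (fun t ht => hr (.inr (mem_image_of_mem g (Ico_subset_Icc_self ht)))) ha

section Projection

variable {d : ℕ}

lemma projMat_transpose (x : Fin d → ℝ) : (projMat d x)ᵀ = projMat d x := by
  ext i j
  simp only [projMat, transpose_apply, of_apply, mul_comm]

lemma projMat_mulVec_self {x : Fin d → ℝ} (hx : x ≠ 0) : projMat d x *ᵥ x = x := by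
  have hS := sum_sq_ne_zero hx
  funext i
  simp only [projMat, mulVec, dotProduct, of_apply]
  calc ∑ j, (x i * x j / ∑ k, x k ^ 2) * x j = x i * (∑ j, x j ^ 2) / ∑ k, x k ^ 2 := by
        rw [Finset.mul_sum, Finset.sum_div]; congr 1; funext j; ring
    _ = x i := by field_simp

lemma vecMul_projMat_self {x : Fin d → ℝ} (hx : x ≠ 0) : x ᵥ* projMat d x = x := by
  rw [← projMat_transpose, vecMul_transpose, projMat_mulVec_self hx]

end Projection

section RadialDecomposition

variable {d : ℕ} {G : (Fin d → ℝ) → Matrix (Fin d) (Fin d) ℝ}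

lemma mulVec_self_of_radialDecomp
    (hdec : ∀ z, z ≠ 0 → G z = projMat d z + (1 - projMat d z) * G z * (1 - projMat d z))
    (x : Fin d → ℝ) : G x *ᵥ x = x := by
  rcases eq_or_ne x 0 with rfl | hx
  · exact mulVec_zero _
  have hperp : (1 - projMat d x) *ᵥ x = 0 := by
    rw [sub_mulVec, one_mulVec, projMat_mulVec_self hx, sub_self]
  rw [hdec x hx, add_mulVec, projMat_mulVec_self hx, ← mulVec_mulVec, hperp, mulVec_zero,
    add_zero]

lemma vecMul_self_of_radialDecomp
    (hdec : ∀ z, z ≠ 0 → G z = projMat d z + (1 - projMat d z) * G z * (1 - projMat d z))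
    (x : Fin d → ℝ) : x ᵥ* G x = x := by
  rcases eq_or_ne x 0 with rfl | hx
  · exact zero_vecMul _
  have hperp : x ᵥ* (1 - projMat d x) = 0 := by
    rw [vecMul_sub, vecMul_one, vecMul_projMat_self hx, sub_self]
  rw [hdec x hx, vecMul_add, vecMul_projMat_self hx, ← vecMul_vecMul, ← vecMul_vecMul, hperp,
    zero_vecMul, zero_vecMul, add_zero]

end RadialDecomposition

section RadialEigenvector

variable {d : ℕ} {G : (Fin d → ℝ) → Matrix (Fin d) (Fin d) ℝ}

/-- Derivative of the identity `G z *ᵥ z = z` in the direction `e_k`. -/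
lemma sum_mul_fderiv_add_eq_one (hGd : ∀ i j, Differentiable ℝ fun z => G z i j)
    (hG : ∀ z, G z *ᵥ z = z) (x : Fin d → ℝ) (i k : Fin d) :
    ∑ j, x j * fderiv ℝ (fun z => G z i j) x (Pi.single k 1) + G x i k =
      (1 : Matrix (Fin d) (Fin d) ℝ) i k := by
  have hsum : HasFDerivAt (fun z : Fin d → ℝ => ∑ j, G z i j * z j)
      (∑ j, (x j • fderiv ℝ (fun z => G z i j) x + G x i j • ContinuousLinearMap.proj j)) x :=
    HasFDerivAt.fun_sum fun j _ => by
      simpa only [add_comm] using (hGd i j x).hasFDerivAt.fun_mul (hasFDerivAt_apply j x)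
  have hcoord : (fun z : Fin d → ℝ => ∑ j, G z i j * z j) = fun z => z i :=
    funext fun z => congrFun (hG z) i
  rw [hcoord] at hsum
  have hk := congrArg (fun L : (Fin d → ℝ) →L[ℝ] ℝ => L (Pi.single k 1))
    (hsum.unique (hasFDerivAt_apply i x))
  simp only [_root_.sum_apply, _root_.add_apply, _root_.smul_apply,
    ContinuousLinearMap.proj_apply, smul_eq_mul, Finset.sum_add_distrib] at hk
  simpa [Pi.single_apply, one_apply, eq_comm] using hk

lemma apply_zero_eq_one_of_mulVec_self (hGd : ∀ i j, Differentiable ℝ fun z => G z i j)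
    (hG : ∀ z, G z *ᵥ z = z) : G 0 = 1 := by
  ext i k
  simpa using sum_mul_fderiv_add_eq_one hGd hG 0 i k

lemma mulVec_eq_self_along_ray (hGd : ∀ i j, Differentiable ℝ fun z => G z i j)
    (hG : ∀ z, G z *ᵥ z = z) (s : ℝ) (v : Fin d → ℝ) : G (s • v) *ᵥ v = v := by
  rcases eq_or_ne s 0 with rfl | hs
  · rw [zero_smul, apply_zero_eq_one_of_mulVec_self hGd hG, one_mulVec]
  · have h := hG (s • v)
    rw [mulVec_smul] at h
    exact smul_right_injective _ hs h

lemma sum_fderiv_mul_along_ray_eq_zero (hGd : ∀ i j, Differentiable ℝ fun z => G z i j)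
    (hG : ∀ z, G z *ᵥ z = z) (s : ℝ) (v : Fin d → ℝ) (k : Fin d) :
    ∑ j, fderiv ℝ (fun z => G z k j) (s • v) v * v j = 0 := by
  have hray : HasDerivAt (fun t : ℝ => t • v) v s := by
    simpa using (hasDerivAt_id s).smul_const v
  have hderiv : HasDerivAt (fun t : ℝ => ∑ j, G (t • v) k j * v j)
      (∑ j, fderiv ℝ (fun z => G z k j) (s • v) v * v j) s :=
    HasDerivAt.fun_sum fun j _ =>
      (((hGd k j (s • v)).hasFDerivAt).comp_hasDerivAt s hray).mul_const (v j)
  have hconst : (fun t : ℝ => ∑ j, G (t • v) k j * v j) = fun _ => v k :=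
    funext fun t => congrFun (mulVec_eq_self_along_ray hGd hG t v) k
  rw [hconst] at hderiv
  exact hderiv.unique (hasDerivAt_const s (v k))

end RadialEigenvector

section GeodesicForce

variable {d : ℕ} {G : (Fin d → ℝ) → Matrix (Fin d) (Fin d) ℝ}

noncomputable def geodesicForce (d : ℕ) (G : (Fin d → ℝ) → Matrix (Fin d) (Fin d) ℝ)
    (x w : Fin d → ℝ) : Fin d → ℝ := fun k =>
  (∑ i, ∑ j, w i * fderiv ℝ (fun z => G z i j) x (Pi.single k 1) * w j) / 2 -
    ∑ j, fderiv ℝ (fun z => G z k j) x w * w j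

lemma isGeodesicODE_iff {γ γ' γ'' : ℝ → Fin d → ℝ} {s : ℝ} :
    IsGeodesicODE d G γ γ' γ'' s ↔ G (γ s) *ᵥ γ'' s = geodesicForce d G (γ s) (γ' s) := by
  simp only [IsGeodesicODE, single_dotProduct, one_mul, funext_iff, geodesicForce]
  exact forall_congr' fun k => ⟨fun h => by linarith, fun h => by linarith⟩

lemma sum_sum_mul_fderiv_mul_along_ray_eq_zero (hGc : ∀ i j, ContDiff ℝ 1 fun z => G z i j)
    (hG : ∀ z, G z *ᵥ z = z) (hG' : ∀ z, z ᵥ* G z = z) (s : ℝ) (v : Fin d → ℝ) (k : Fin d) :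
    ∑ i, ∑ j, v i * fderiv ℝ (fun z => G z i j) (s • v) (Pi.single k 1) * v j = 0 := by
  have hGd : ∀ i j, Differentiable ℝ fun z => G z i j :=
    fun i j => (hGc i j).differentiable one_ne_zero
  set F : ℝ → ℝ :=
    fun t => ∑ i, ∑ j, v i * fderiv ℝ (fun z => G z i j) (t • v) (Pi.single k 1) * v j
  have hF : Continuous F := by
    refine continuous_finsetSum _ fun i _ => continuous_finsetSum _ fun j _ => ?_
    have hD : Continuous fun t : ℝ => fderiv ℝ (fun z => G z i j) (t • v) :=
      ((hGc i j).continuous_fderiv one_ne_zero).comp (continuous_id.smul continuous_const)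
    exact (continuous_const.mul (hD.clm_apply continuous_const)).mul continuous_const
  have hvG : ∀ t : ℝ, ∑ i, v i * G (t • v) i k = v k := fun t => by
    simpa [mulVec, dotProduct, mul_comm] using
      congrFun (mulVec_eq_self_along_ray (G := fun z => (G z)ᵀ) (fun i j => hGd j i)
        (fun z => by rw [mulVec_transpose, hG' z]) t v) k
  have hmul : ∀ t, t * F t = 0 := fun t => by
    calc t * F t
        = ∑ i, v i * ∑ j, (t • v) j * fderiv ℝ (fun z => G z i j) (t • v) (Pi.single k 1) := by
          simp only [F, Finset.mul_sum, Pi.smul_apply, smul_eq_mul]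
          exact Finset.sum_congr rfl fun i _ => Finset.sum_congr rfl fun j _ => by ring
      _ = ∑ i, v i * ((1 : Matrix (Fin d) (Fin d) ℝ) i k - G (t • v) i k) := by
          simp only [← sum_mul_fderiv_add_eq_one hGd hG (t • v), add_sub_cancel_right]
      _ = 0 := by
          simp [mul_sub, Finset.sum_sub_distrib, one_apply, hvG]
  have hzero : EqOn F 0 {0}ᶜ := fun t ht =>
    (mul_eq_zero.mp (hmul t)).resolve_left ht
  exact congrFun (hF.ext_on (dense_compl_singleton 0) continuous_const hzero) s

lemma geodesicForce_along_ray_eq_zero (hGc : ∀ i j, ContDiff ℝ 1 fun z => G z i j)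
    (hG : ∀ z, G z *ᵥ z = z) (hG' : ∀ z, z ᵥ* G z = z) (s : ℝ) (v : Fin d → ℝ) :
    geodesicForce d G (s • v) v = 0 := by
  funext k
  simp only [geodesicForce, sum_sum_mul_fderiv_mul_along_ray_eq_zero hGc hG hG',
    sum_fderiv_mul_along_ray_eq_zero (fun i j => (hGc i j).differentiable one_ne_zero) hG]
  simp

end GeodesicForce

section GeodesicField

variable {d : ℕ} {G : (Fin d → ℝ) → Matrix (Fin d) (Fin d) ℝ}

noncomputable def geodesicField (d : ℕ) (G : (Fin d → ℝ) → Matrix (Fin d) (Fin d) ℝ)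
    (p : (Fin d → ℝ) × (Fin d → ℝ)) : (Fin d → ℝ) × (Fin d → ℝ) :=
  (p.2, (G p.1)⁻¹ *ᵥ geodesicForce d G p.1 p.2)

lemma hasDerivAt_geodesicField {γ γ' γ'' : ℝ → Fin d → ℝ} {s : ℝ}
    (hγ : HasDerivAt γ (γ' s) s) (hγ' : HasDerivAt γ' (γ'' s) s)
    (hode : IsGeodesicODE d G γ γ' γ'' s) (hdet : (G (γ s)).det ≠ 0) :
    HasDerivAt (fun t => (γ t, γ' t)) (geodesicField d G (γ s, γ' s)) s := by
  rw [isGeodesicODE_iff] at hode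
  have hγ'' : (G (γ s))⁻¹ *ᵥ geodesicForce d G (γ s) (γ' s) = γ'' s := by
    rw [← hode, mulVec_mulVec, nonsing_inv_mul _ (isUnit_iff_ne_zero.mpr hdet), one_mulVec]
  simpa only [geodesicField, hγ''] using hγ.prodMk hγ'

lemma contDiff_geodesicField (hGc : ∀ i j, ContDiff ℝ 2 fun z => G z i j)
    (hdet : ∀ x, (G x).det ≠ 0) : ContDiff ℝ 1 (geodesicField d G) := by
  have hw : ∀ i, ContDiff ℝ 1 fun p : (Fin d → ℝ) × (Fin d → ℝ) => p.2 i :=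
    fun i => (contDiff_apply ℝ ℝ i).comp contDiff_snd
  have hD : ∀ i j, ContDiff ℝ 1
      fun p : (Fin d → ℝ) × (Fin d → ℝ) => fderiv ℝ (fun z => G z i j) p.1 :=
    fun i j => ((hGc i j).fderiv_right (by norm_num)).comp contDiff_fst
  have hforce : ∀ k, ContDiff ℝ 1
      fun p : (Fin d → ℝ) × (Fin d → ℝ) => geodesicForce d G p.1 p.2 k := fun k =>
    (ContDiff.sum fun i _ => ContDiff.sum fun j _ =>
      ((hw i).mul ((hD i j).clm_apply contDiff_const)).mul (hw j)).div_const 2 |>.sub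
    (ContDiff.sum fun j _ => ((hD k j).clm_apply contDiff_snd).mul (hw j))
  have hinv : ∀ i j, ContDiff ℝ 1 fun p : (Fin d → ℝ) × (Fin d → ℝ) => (G p.1)⁻¹ i j :=
    fun i j => (contDiff_inv_apply_of_entries (fun i j => (hGc i j).of_le (by norm_num))
      hdet i j).comp contDiff_fst
  refine contDiff_snd.prodMk <| contDiff_pi.mpr fun k => ?_
  simpa only [mulVec, dotProduct] using
    ContDiff.sum (s := Finset.univ) fun j _ => (hinv k j).mul (hforce j)

end GeodesicField

theorem stmt_12_general (d : ℕ) (a b : ℝ) (ha : 0 < a)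
    (G : (Fin d → ℝ) → Matrix (Fin d) (Fin d) ℝ)
    (hGsm : ∀ i j, ContDiff ℝ 2 fun z => G z i j)
    (hell : ∀ z y : Fin d → ℝ,
      a * ∑ i, y i ^ 2 ≤ dotProduct y ((G z).mulVec y) ∧
      dotProduct y ((G z).mulVec y) ≤ b * ∑ i, y i ^ 2)
    (hdec : ∀ z : Fin d → ℝ, z ≠ 0 →
      G z = projMat d z + (1 - projMat d z) * G z * (1 - projMat d z)) :
    (∀ v : Fin d → ℝ, ∀ s : ℝ,
      IsGeodesicODE d G (fun t => t • v) (fun _ => v) (fun _ => 0) s) ∧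
    (∀ v : Fin d → ℝ, ∀ γ γ' γ'' : ℝ → Fin d → ℝ,
      γ 0 = 0 → γ' 0 = v →
      (∀ s ∈ Set.Icc (0:ℝ) 1, HasDerivAt γ (γ' s) s) →
      (∀ s ∈ Set.Icc (0:ℝ) 1, HasDerivAt γ' (γ'' s) s) →
      (∀ s ∈ Set.Icc (0:ℝ) 1, IsGeodesicODE d G γ γ' γ'' s) →
      ∀ s ∈ Set.Icc (0:ℝ) 1, γ s = s • v) := by
  have hray : ∀ v : Fin d → ℝ, ∀ s : ℝ,
      IsGeodesicODE d G (fun t => t • v) (fun _ => v) (fun _ => 0) s := fun v s => by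
    rw [isGeodesicODE_iff, mulVec_zero, geodesicForce_along_ray_eq_zero
      (fun i j => (hGsm i j).of_le (by norm_num)) (mulVec_self_of_radialDecomp hdec)
      (vecMul_self_of_radialDecomp hdec)]
  refine ⟨hray, fun v γ γ' γ'' hγ₀ hγ'₀ hγ hγ' hode s hs => ?_⟩
  have hdet : ∀ x, (G x).det ≠ 0 := fun x => det_ne_zero_of_coercive ha fun y => (hell x y).1
  have hline : ∀ t : ℝ, HasDerivAt (fun t : ℝ => t • v) v t := fun t => by
    simpa using (hasDerivAt_id t).smul_const v
  have hsame := ODE_solution_unique_of_contDiff (contDiff_geodesicField hGsm hdet)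
    (fun t ht => hasDerivAt_geodesicField (hγ t ht) (hγ' t ht) (hode t ht) (hdet _))
    (fun t _ => hasDerivAt_geodesicField (hline t) (hasDerivAt_const t v) (hray v t) (hdet _))
    (by simp [hγ₀, hγ'₀])
  exact congrArg Prod.fst (hsame hs)

/-- For a metric with the radial block decomposition, the straight line `γ(s) = s v` is,
for every `v`, the unique solution to the geodesic equation with `γ(0) = 0`, `γ'(0) = v`. -/
theorem stmt_12 (d : ℕ) (hd : 2 ≤ d) (a b C : ℝ) (ha : 0 < a) (hb : 0 < b) (hC : 0 < C)
    (G : (Fin d → ℝ) → Matrix (Fin d) (Fin d) ℝ)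
    (hGsm : ∀ i j, ContDiff ℝ 2 fun z => G z i j)
    (hGsymm : ∀ z, (G z).IsSymm)
    (hell : ∀ z y : Fin d → ℝ,
      a * ∑ i, y i ^ 2 ≤ dotProduct y ((G z).mulVec y) ∧
      dotProduct y ((G z).mulVec y) ≤ b * ∑ i, y i ^ 2)
    (hbd : ∀ z : Fin d → ℝ, ∀ i j, |G z i j| ≤ C ∧
      ‖fderiv ℝ (fun w => G w i j) z‖ ≤ C / (1 + ‖z‖))
    (hdec : ∀ z : Fin d → ℝ, z ≠ 0 →
      G z = projMat d z + (1 - projMat d z) * G z * (1 - projMat d z)) :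
    (∀ v : Fin d → ℝ, ∀ s : ℝ,
      IsGeodesicODE d G (fun t => t • v) (fun _ => v) (fun _ => 0) s) ∧
    (∀ v : Fin d → ℝ, ∀ γ γ' γ'' : ℝ → Fin d → ℝ,
      γ 0 = 0 → γ' 0 = v →
      (∀ s ∈ Set.Icc (0:ℝ) 1, HasDerivAt γ (γ' s) s) →
      (∀ s ∈ Set.Icc (0:ℝ) 1, HasDerivAt γ' (γ'' s) s) →
      (∀ s ∈ Set.Icc (0:ℝ) 1, IsGeodesicODE d G γ γ' γ'' s) →
      ∀ s ∈ Set.Icc (0:ℝ) 1, γ s = s • v) :=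
  stmt_12_general d a b ha G hGsm hell hdec
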